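/- Let T be a bounded linear operator on a complex Hilbert space H and r ≥ 1. Then sup over unit vectors x of |⟨|T||T*|x,x⟩|^r is at most (1/2)‖|T|^{2r} + |T*|^{2r}‖. -/

import Mathlib

/-!
Since `|T|` is self-adjoint, `|⟪|T| |T*| x, x⟫| = |⟪|T*| x, |T| x⟫| ≤ ‖|T| x‖ ‖|T*| x‖`, and AM-GM
bounds the `r`-th power of the right side by `(‖|T| x‖ ^ (2r) + ‖|T*| x‖ ^ (2r)) / 2`. For a unit
vector `x` the Hölder–McCarthy inequality `⟪P x, x⟫ ^ r ≤ ⟪P ^ r x, x⟫` (`P ≥ 0`, `r ≥ 1`), applied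
to `P = |T| ^ 2` and `P = |T*| ^ 2`, bounds this by `⟪(|T| ^ (2r) + |T*| ^ (2r)) x, x⟫ / 2`, which is
at most half the norm of `|T| ^ (2r) + |T*| ^ (2r)`.
-/

open scoped InnerProductSpace

noncomputable def opAbs {H : Type*} [NormedAddCommGroup H] [InnerProductSpace ℂ H]
    [CompleteSpace H] (T : H →L[ℂ] H) : H →L[ℂ] H :=
  CFC.sqrt ((ContinuousLinearMap.adjoint T) * T)

noncomputable def numRadius {H : Type*} [NormedAddCommGroup H] [InnerProductSpace ℂ H]
    (T : H →L[ℂ] H) : ℝ :=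
  ⨆ x : {y : H // ‖y‖ = 1}, ‖⟪T (x : H), (x : H)⟫_ℂ‖

/-- Young's inequality with the conjugate exponents `r` and `r / (r - 1)`. -/
lemma Real.mul_rpow_sub_one_le {r a t : ℝ} (hr : 1 ≤ r) (ha : 0 ≤ a) (ht : 0 ≤ t) :
    t * a ^ (r - 1) ≤ r⁻¹ * t ^ r + (1 - r⁻¹) * a ^ r := by
  have hr₀ : r ≠ 0 := by positivity
  have hw : 0 ≤ 1 - r⁻¹ := sub_nonneg.mpr (inv_le_one_of_one_le₀ hr)
  have h := Real.geom_mean_le_arith_mean2_weighted (inv_nonneg.mpr (zero_le_one.trans hr)) hw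
    (Real.rpow_nonneg ht r) (Real.rpow_nonneg ha r) (add_sub_cancel _ _)
  rwa [Real.rpow_rpow_inv ht hr₀, ← Real.rpow_mul ha, mul_sub, mul_one,
    mul_inv_cancel₀ hr₀] at h

lemma Real.mul_rpow_le_add_rpow_two_mul_div_two {x y : ℝ} (hx : 0 ≤ x) (hy : 0 ≤ y) (r : ℝ) :
    (x * y) ^ r ≤ (x ^ (2 * r) + y ^ (2 * r)) / 2 := by
  rw [Real.mul_rpow hx hy, mul_comm 2 r, Real.rpow_mul hx, Real.rpow_mul hy]
  norm_cast
  linarith [two_mul_le_add_sq (x ^ r) (y ^ r)]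

namespace ContinuousLinearMap

variable {H : Type*} [NormedAddCommGroup H] [InnerProductSpace ℂ H]

lemma re_inner_map_self_mono {P Q : H →L[ℂ] H} (h : P ≤ Q) (x : H) :
    (⟪P x, x⟫_ℂ).re ≤ (⟪Q x, x⟫_ℂ).re := by
  simpa [inner_sub_left] using h.re_inner_nonneg_left x

lemma re_inner_map_self_le_opNorm (N : H →L[ℂ] H) {x : H} (hx : ‖x‖ = 1) :
    (⟪N x, x⟫_ℂ).re ≤ ‖N‖ := by
  calc (⟪N x, x⟫_ℂ).re ≤ ‖N x‖ * ‖x‖ := re_inner_le_norm (𝕜 := ℂ) (N x) x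
    _ ≤ ‖N‖ * ‖x‖ * ‖x‖ := by gcongr; exact N.le_opNorm x
    _ = ‖N‖ := by rw [hx, mul_one, mul_one]

variable [CompleteSpace H]

/-- Hölder–McCarthy inequality. The functional calculus turns Young's inequality at
`a = ⟪P x, x⟫` into an operator inequality, which is then evaluated at `x`. -/
theorem re_inner_map_self_rpow_le {P : H →L[ℂ] H} (hP : 0 ≤ P) {r : ℝ} (hr : 1 ≤ r) {x : H}
    (hx : ‖x‖ = 1) : (⟪P x, x⟫_ℂ).re ^ r ≤ (⟪(P ^ r) x, x⟫_ℂ).re := by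
  set a := (⟪P x, x⟫_ℂ).re
  have ha : 0 ≤ a := ((nonneg_iff_isPositive P).mp hP).re_inner_nonneg_left x
  have hr₀ : 0 < r := zero_lt_one.trans_le hr
  have hop : a ^ (r - 1) • P ≤ r⁻¹ • P ^ r + algebraMap ℝ _ ((1 - r⁻¹) * a ^ r) := by
    have hcont : Continuous fun t : ℝ ↦ t ^ r := Real.continuous_rpow_const hr₀.le
    have := cfc_mono (a := P) (f := fun t ↦ a ^ (r - 1) * t)
      (g := fun t ↦ r⁻¹ * t ^ r + (1 - r⁻¹) * a ^ r)
      (fun t ht ↦ by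
        rw [mul_comm]; exact Real.mul_rpow_sub_one_le hr ha (spectrum_nonneg_of_nonneg hP ht))
      (hg := by fun_prop)
    rwa [cfc_const_mul_id _ P, cfc_add _ _ _ (by fun_prop), cfc_const_mul _ _ P, cfc_const _ P,
      ← CFC.rpow_eq_cfc_real hP] at this
  have hmul : a ^ (r - 1) * a = a ^ r := by
    rw [← Real.rpow_add_one' ha (by linarith), sub_add_cancel]
  have key := re_inner_map_self_mono hop x
  rw [show (⟪(a ^ (r - 1) • P) x, x⟫_ℂ).re = a ^ r by simp [a, hmul],
    show (⟪(r⁻¹ • P ^ r + algebraMap ℝ _ ((1 - r⁻¹) * a ^ r)) x, x⟫_ℂ).re =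
      r⁻¹ * (⟪(P ^ r) x, x⟫_ℂ).re + (1 - r⁻¹) * a ^ r by
        simp [Algebra.algebraMap_eq_smul_one, hx]] at key
  have : r⁻¹ * a ^ r ≤ r⁻¹ * (⟪(P ^ r) x, x⟫_ℂ).re := by linarith
  exact le_of_mul_le_mul_left this (by positivity)

theorem norm_apply_rpow_two_mul_le {S : H →L[ℂ] H} (hS : 0 ≤ S) {r : ℝ} (hr : 1 ≤ r) {x : H}
    (hx : ‖x‖ = 1) : ‖S x‖ ^ (2 * r) ≤ (⟪(S ^ (2 * r)) x, x⟫_ℂ).re := by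
  have hsq : (⟪(S ^ (2 : ℝ)) x, x⟫_ℂ).re = ‖S x‖ ^ 2 := by
    rw [show (2 : ℝ) = (2 : ℕ) by norm_num, CFC.rpow_natCast S 2 hS, pow_two,
      apply_norm_sq_eq_inner_adjoint_left, (IsSelfAdjoint.of_nonneg hS).adjoint_eq]
    rfl
  calc ‖S x‖ ^ (2 * r) = (‖S x‖ ^ 2) ^ r := by
        rw [Real.rpow_mul (norm_nonneg _)]; norm_cast
    _ = (⟪(S ^ (2 : ℝ)) x, x⟫_ℂ).re ^ r := by rw [hsq]
    _ ≤ (⟪((S ^ (2 : ℝ)) ^ r) x, x⟫_ℂ).re := re_inner_map_self_rpow_le CFC.rpow_nonneg hr hx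
    _ = (⟪(S ^ (2 * r)) x, x⟫_ℂ).re := by
        rw [CFC.rpow_rpow_of_exponent_nonneg S 2 r zero_le_two (by linarith)]

end ContinuousLinearMap

theorem stmt_11 {H : Type*} [NormedAddCommGroup H] [InnerProductSpace ℂ H] [CompleteSpace H]
    (T : H →L[ℂ] H) (r : ℝ) (hr : 1 ≤ r) :
    (⨆ x : {y : H // ‖y‖ = 1},
        ‖⟪(opAbs T) ((opAbs (ContinuousLinearMap.adjoint T)) (x : H)), (x : H)⟫_ℂ‖ ^ r) ≤
      (1 / 2) * ‖CFC.rpow (opAbs T) (2 * r) +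
          CFC.rpow (opAbs (ContinuousLinearMap.adjoint T)) (2 * r)‖ := by
  set A := opAbs T
  set B := opAbs (ContinuousLinearMap.adjoint T)
  have hA : 0 ≤ A := CFC.sqrt_nonneg _
  have hB : 0 ≤ B := CFC.sqrt_nonneg _
  refine Real.iSup_le (fun ⟨v, hv⟩ ↦ ?_) (by positivity)
  calc ‖⟪A (B v), v⟫_ℂ‖ ^ r ≤ (‖A v‖ * ‖B v‖) ^ r := by
        gcongr
        rw [((ContinuousLinearMap.nonneg_iff_isPositive A).mp hA).inner_left_eq_inner_right,
          mul_comm]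
        exact norm_inner_le_norm _ _
    _ ≤ (‖A v‖ ^ (2 * r) + ‖B v‖ ^ (2 * r)) / 2 :=
        Real.mul_rpow_le_add_rpow_two_mul_div_two (norm_nonneg _) (norm_nonneg _) r
    _ ≤ ((⟪(A ^ (2 * r)) v, v⟫_ℂ).re + (⟪(B ^ (2 * r)) v, v⟫_ℂ).re) / 2 := by
        gcongr <;> exact ContinuousLinearMap.norm_apply_rpow_two_mul_le ‹_› hr hv
    _ = (⟪(A ^ (2 * r) + B ^ (2 * r)) v, v⟫_ℂ).re / 2 := by simp
    _ ≤ 1 / 2 * ‖CFC.rpow A (2 * r) + CFC.rpow B (2 * r)‖ := by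
        rw [CFC.rpow_eq_pow, CFC.rpow_eq_pow]
        linarith [(A ^ (2 * r) + B ^ (2 * r)).re_inner_map_self_le_opNorm hv]
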